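/- arXiv:2011.12825 — 7 statements merged into one kernel-verified Lean document; each statement's English description precedes it below -/
import Mathlib

section
/- For any x ∈ ℝ^n, w ∈ ℝ^n and μ > 0, the residual function satisfies min{1, μ}·‖r_1(x, w)‖ ≤ ‖r_μ(x, w)‖ ≤ max{1, μ}·‖r_1(x, w)‖. -/
/-!
Write `r_μ = x - P (x - μ • w)`. The variational inequalities characterising `P (x - a • w)` and
`P (x - b • w)`, multiplied by `b` and `a` and added, eliminate `w` and give
`⟪a • r_b - b • r_a, r_b - r_a⟫ ≤ 0`. With Cauchy–Schwarz this becomes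
`(a ‖r_b‖ - b ‖r_a‖) (‖r_b‖ - ‖r_a‖) ≤ 0`, so for `0 < a ≤ b` both `‖r_a‖ ≤ ‖r_b‖` and
`a ‖r_b‖ ≤ b ‖r_a‖`. Comparing `μ` with `1` gives the two bounds.
-/

open scoped RealInnerProductSpace

theorem le_and_mul_le_mul_of_mul_sub_mul_le_zero {a b A B : ℝ} (ha : 0 < a) (hab : a ≤ b)
    (hA : 0 ≤ A) (h : (a * B - b * A) * (B - A) ≤ 0) :
    A ≤ B ∧ a * B ≤ b * A := by
  have hbA : a * A ≤ b * A := mul_le_mul_of_nonneg_right hab hA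
  have hAB : A ≤ B := by
    by_contra! hlt
    have : a * B - b * A < 0 := by nlinarith
    nlinarith [mul_pos_of_neg_of_neg this (sub_neg.2 hlt)]
  refine ⟨hAB, ?_⟩
  by_contra! hlt
  have : A < B := by nlinarith
  nlinarith [mul_pos (sub_pos.2 hlt) (sub_pos.2 this)]

section Projection

variable {F : Type*} [NormedAddCommGroup F] [InnerProductSpace ℝ F]

theorem real_inner_sub_le_zero_of_forall_norm_sub_le {C : Set F} (hC : Convex ℝ C) {u v : F}
    (hv : v ∈ C) (hmin : ∀ z ∈ C, ‖u - v‖ ≤ ‖u - z‖) :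
    ∀ z ∈ C, ⟪u - v, z - v⟫ ≤ 0 := by
  have : Nonempty C := ⟨⟨v, hv⟩⟩
  refine (norm_eq_iInf_iff_real_inner_le_zero hC hv).1 (le_antisymm ?_ ?_)
  · exact le_ciInf fun z => hmin z z.2
  · have hbdd : BddBelow (Set.range fun z : C => ‖u - z‖) :=
      ⟨0, Set.forall_mem_range.2 fun _ => norm_nonneg _⟩
    exact ciInf_le hbdd ⟨v, hv⟩

theorem real_inner_smul_sub_smul_le_zero {ra rb w : F} {a b : ℝ} (ha : 0 ≤ a) (hb : 0 ≤ b)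
    (hb_vi : ⟪rb - b • w, rb - ra⟫ ≤ 0) (ha_vi : ⟪ra - a • w, ra - rb⟫ ≤ 0) :
    ⟪a • rb - b • ra, rb - ra⟫ ≤ 0 := by
  have key : ⟪a • rb - b • ra, rb - ra⟫
      = a * ⟪rb - b • w, rb - ra⟫ + b * ⟪ra - a • w, ra - rb⟫ := by
    simp only [inner_sub_left, inner_sub_right, real_inner_smul_left, real_inner_comm ra rb]
    ring
  rw [key]
  nlinarith

theorem mul_norm_sub_mul_norm_le_zero_of_real_inner_le_zero {u v : F} {a b : ℝ}
    (hab : 0 ≤ a + b) (h : ⟪a • v - b • u, v - u⟫ ≤ 0) :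
    (a * ‖v‖ - b * ‖u‖) * (‖v‖ - ‖u‖) ≤ 0 := by
  have hexp : ⟪a • v - b • u, v - u⟫ = a * ‖v‖ ^ 2 - (a + b) * ⟪u, v⟫ + b * ‖u‖ ^ 2 := by
    simp only [inner_sub_left, inner_sub_right, real_inner_smul_left, real_inner_self_eq_norm_sq,
      real_inner_comm u v]
    ring
  nlinarith [mul_le_mul_of_nonneg_left (real_inner_le_norm u v) hab]

theorem norm_sub_proj_sub_smul_mono {C : Set F} (hC : Convex ℝ C) {P : F → F}
    (hP : ∀ u, P u ∈ C ∧ ∀ z ∈ C, ‖u - P u‖ ≤ ‖u - z‖)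
    (x w : F) {a b : ℝ} (ha : 0 < a) (hab : a ≤ b) :
    ‖x - P (x - a • w)‖ ≤ ‖x - P (x - b • w)‖ ∧
      a * ‖x - P (x - b • w)‖ ≤ b * ‖x - P (x - a • w)‖ := by
  have vi (μ ν : ℝ) :
      ⟪(x - P (x - μ • w)) - μ • w, (x - P (x - μ • w)) - (x - P (x - ν • w))⟫ ≤ 0 := by
    have h := real_inner_sub_le_zero_of_forall_norm_sub_le hC (hP (x - μ • w)).1
      (hP (x - μ • w)).2 _ (hP (x - ν • w)).1
    convert h using 2 <;> abel
  have hinner := real_inner_smul_sub_smul_le_zero ha.le (ha.le.trans hab) (vi b a) (vi a b)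
  exact le_and_mul_le_mul_of_mul_sub_mul_le_zero ha hab (norm_nonneg _)
    (mul_norm_sub_mul_norm_le_zero_of_real_inner_le_zero (by linarith) hinner)

end Projection

theorem stmt_3_general {n : ℕ} (C : Set (EuclideanSpace ℝ (Fin n)))
    (hCconv : Convex ℝ C)
    (P : EuclideanSpace ℝ (Fin n) → EuclideanSpace ℝ (Fin n))
    (hP : ∀ u, P u ∈ C ∧ ∀ z ∈ C, ‖u - P u‖ ≤ ‖u - z‖)
    (x w : EuclideanSpace ℝ (Fin n)) (μ : ℝ) (hμ : 0 < μ) :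
    min 1 μ * ‖x - P (x - (1 : ℝ) • w)‖ ≤ ‖x - P (x - μ • w)‖ ∧
      ‖x - P (x - μ • w)‖ ≤ max 1 μ * ‖x - P (x - (1 : ℝ) • w)‖ := by
  rcases le_total 1 μ with h | h
  · obtain ⟨hle, hmul⟩ := norm_sub_proj_sub_smul_mono hCconv hP x w one_pos h
    rw [min_eq_left h, max_eq_right h]
    exact ⟨by linarith, by linarith⟩
  · obtain ⟨hle, hmul⟩ := norm_sub_proj_sub_smul_mono hCconv hP x w hμ h
    rw [min_eq_right h, max_eq_left h]
    exact ⟨by linarith, by linarith⟩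

theorem stmt_3 {n : ℕ} (C : Set (EuclideanSpace ℝ (Fin n)))
    (hCne : C.Nonempty) (hCc : IsClosed C) (hCconv : Convex ℝ C)
    (P : EuclideanSpace ℝ (Fin n) → EuclideanSpace ℝ (Fin n))
    (hP : ∀ u, P u ∈ C ∧ ∀ z ∈ C, ‖u - P u‖ ≤ ‖u - z‖)
    (x w : EuclideanSpace ℝ (Fin n)) (μ : ℝ) (hμ : 0 < μ) :
    min 1 μ * ‖x - P (x - (1 : ℝ) • w)‖ ≤ ‖x - P (x - μ • w)‖ ∧
      ‖x - P (x - μ • w)‖ ≤ max 1 μ * ‖x - P (x - (1 : ℝ) • w)‖ :=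
  stmt_3_general C hCconv P hP x w μ hμ
end

section
/- Let {φ_n}, {θ_n}, {α_n} be sequences in [0, ∞) such that φ_{n+1} ≤ φ_n + α_n(φ_n - φ_{n-1}) + θ_n for all n ≥ 1, with ∑_{n=1}^∞ θ_n < ∞, and suppose there is α with 0 ≤ α_n ≤ α < 1 for all n. Then ∑_{n=1}^∞ max{φ_n - φ_{n-1}, 0} < ∞. -/
/-!
Writing `δ n = [φ (n+1) - φ n]_+`, the recursion gives `δ (n+1) ≤ α δ n + θ (n+1)`. Summing this over
`n < N` bounds the partial sums `S N` of `δ` by `δ 0 + α S N + ∑ θ`, so `(1 - α) S N ≤ δ 0 + ∑ θ`,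
and a nonnegative series with bounded partial sums converges.
-/

lemma summable_of_succ_le_mul_add {δ θ : ℕ → ℝ} {α : ℝ} (hδ : ∀ n, 0 ≤ δ n) (hθ : ∀ n, 0 ≤ θ n)
    (hθs : Summable θ) (hα : α < 1) (hstep : ∀ n, δ (n + 1) ≤ α * δ n + θ n) :
    Summable δ := by
  refine summable_of_sum_range_le (c := (δ 0 + ∑' n, θ n) / (1 - α)) hδ fun N => ?_
  rw [le_div_iff₀ (sub_pos.mpr hα)]
  have hmono : ∑ i ∈ Finset.range N, δ i ≤ ∑ i ∈ Finset.range (N + 1), δ i :=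
    Finset.sum_le_sum_of_subset_of_nonneg (by simp) fun i _ _ => hδ i
  have hshift : ∑ i ∈ Finset.range N, δ (i + 1)
      ≤ α * ∑ i ∈ Finset.range N, δ i + ∑ i ∈ Finset.range N, θ i := by
    rw [Finset.mul_sum, ← Finset.sum_add_distrib]
    exact Finset.sum_le_sum fun i _ => hstep i
  have hθle : ∑ i ∈ Finset.range N, θ i ≤ ∑' n, θ n :=
    hθs.sum_le_tsum _ fun i _ => hθ i
  rw [Finset.sum_range_succ'] at hmono
  linarith

theorem stmt_5_general (φ θ a : ℕ → ℝ) (α : ℝ)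
    (hθ : ∀ n, 0 ≤ θ n) (ha : ∀ n, 0 ≤ a n)
    (hrec : ∀ n, 1 ≤ n → φ (n + 1) ≤ φ n + a n * (φ n - φ (n - 1)) + θ n)
    (hθsum : Summable θ) (hαb : ∀ n, a n ≤ α) (hα : α < 1) :
    Summable fun n => max (φ (n + 1) - φ n) 0 := by
  have hα0 : 0 ≤ α := (ha 0).trans (hαb 0)
  refine summable_of_succ_le_mul_add (fun n => le_max_right _ 0) (fun n => hθ (n + 1))
    ((summable_nat_add_iff 1).mpr hθsum) hα fun n => max_le ?_ ?_
  · have hmomentum : a (n + 1) * (φ (n + 1) - φ n) ≤ α * max (φ (n + 1) - φ n) 0 :=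
      (mul_le_mul_of_nonneg_left (le_max_left _ _) (ha _)).trans
        (mul_le_mul_of_nonneg_right (hαb _) (le_max_right _ _))
    have hrec' := hrec (n + 1) (Nat.le_add_left 1 n)
    rw [Nat.add_sub_cancel] at hrec'
    linarith
  · have := hθ (n + 1)
    positivity

theorem stmt_5 (φ θ a : ℕ → ℝ) (α : ℝ)
    (hφ : ∀ n, 0 ≤ φ n) (hθ : ∀ n, 0 ≤ θ n) (ha : ∀ n, 0 ≤ a n)
    (hrec : ∀ n, 1 ≤ n → φ (n + 1) ≤ φ n + a n * (φ n - φ (n - 1)) + θ n)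
    (hθsum : Summable θ) (hαb : ∀ n, a n ≤ α) (hα : α < 1) :
    Summable fun n => max (φ (n + 1) - φ n) 0 :=
  stmt_5_general φ θ a α hθ ha hrec hθsum hαb hα
end

section
/- Let {φ_n}, {θ_n}, {α_n} be sequences in [0, ∞) such that φ_{n+1} ≤ φ_n + α_n(φ_n - φ_{n-1}) + θ_n for all n ≥ 1, with ∑_{n=1}^∞ θ_n < ∞, and suppose there is α with 0 ≤ α_n ≤ α < 1 for all n. Then the limit lim_{n→∞} φ_n exists in [0, ∞). -/
/-!
Write `δ n = (φ (n + 1) - φ n)⁺`. Since `0 ≤ aₙ ≤ α`, the recursion gives `δ (n + 1) ≤ α δ n + θ (n + 1)`,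
and summing this with `α < 1` bounds the partial sums of `δ`, so `δ` is summable. Then `φ n - ∑_{i<n} δ i`
is antitone and bounded below, hence convergent, and so `φ` converges.
-/

open Filter Topology Finset

lemma posPart_le_mul_posPart_add {a α x y θ : ℝ} (ha : 0 ≤ a) (haα : a ≤ α) (hθ : 0 ≤ θ)
    (h : y ≤ a * x + θ) : y⁺ ≤ α * x⁺ + θ := by
  have hα : 0 ≤ α := ha.trans haα
  have hax : a * x ≤ α * x⁺ :=
    calc a * x ≤ a * x⁺ := mul_le_mul_of_nonneg_left (le_posPart x) ha
      _ ≤ α * x⁺ := mul_le_mul_of_nonneg_right haα (posPart_nonneg x)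
  rw [posPart_def]
  exact max_le (by linarith) (add_nonneg (mul_nonneg hα (posPart_nonneg x)) hθ)

lemma summable_of_succ_le_mul_add_s6 {δ ε : ℕ → ℝ} {α : ℝ} (hδ : ∀ n, 0 ≤ δ n) (hε : ∀ n, 0 ≤ ε n)
    (hεsum : Summable ε) (hα : α < 1) (h : ∀ n, δ (n + 1) ≤ α * δ n + ε n) : Summable δ := by
  refine summable_of_sum_range_le hδ (c := (δ 0 + ∑' n, ε n) / (1 - α)) fun N ↦ ?_
  have hsucc : ∑ i ∈ range N, δ (i + 1) ≤ α * ∑ i ∈ range N, δ i + ∑ i ∈ range N, ε i := by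
    rw [mul_sum, ← sum_add_distrib]
    exact sum_le_sum fun i _ ↦ h i
  have hεle : ∑ i ∈ range N, ε i ≤ ∑' n, ε n := hεsum.sum_le_tsum _ fun i _ ↦ hε i
  have hmono : ∑ i ∈ range N, δ i ≤ ∑ i ∈ range (N + 1), δ i :=
    sum_le_sum_of_subset_of_nonneg (range_subset_range.mpr N.le_succ) fun i _ _ ↦ hδ i
  rw [sum_range_succ'] at hmono
  rw [le_div_iff₀ (sub_pos.mpr hα)]
  linarith

lemma exists_tendsto_of_summable_posPart_sub {φ : ℕ → ℝ} (hbdd : BddBelow (Set.range φ))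
    (hsum : Summable fun n ↦ (φ (n + 1) - φ n)⁺) : ∃ L, Tendsto φ atTop (𝓝 L) := by
  set δ : ℕ → ℝ := fun n ↦ (φ (n + 1) - φ n)⁺
  set ψ : ℕ → ℝ := fun n ↦ φ n - ∑ i ∈ range n, δ i
  have hanti : Antitone ψ := antitone_nat_of_succ_le fun n ↦ by
    simp only [ψ, sum_range_succ]
    linarith [le_posPart (φ (n + 1) - φ n)]
  obtain ⟨m, hm⟩ := hbdd
  have hψbdd : BddBelow (Set.range ψ) := by
    refine ⟨m - ∑' n, δ n, ?_⟩
    rintro _ ⟨n, rfl⟩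
    have hpartial : ∑ i ∈ range n, δ i ≤ ∑' n, δ n :=
      hsum.sum_le_tsum _ fun i _ ↦ posPart_nonneg _
    have : m ≤ φ n := hm ⟨n, rfl⟩
    simp only [ψ]
    linarith
  refine ⟨_, ((tendsto_atTop_ciInf hanti hψbdd).add hsum.hasSum.tendsto_sum_nat).congr fun n ↦ ?_⟩
  simp only [ψ, sub_add_cancel]

theorem stmt_6 (φ θ a : ℕ → ℝ) (α : ℝ)
    (hφ : ∀ n, 0 ≤ φ n) (hθ : ∀ n, 0 ≤ θ n) (ha : ∀ n, 0 ≤ a n)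
    (hrec : ∀ n, 1 ≤ n → φ (n + 1) ≤ φ n + a n * (φ n - φ (n - 1)) + θ n)
    (hθsum : Summable θ) (hαb : ∀ n, a n ≤ α) (hα : α < 1) :
    ∃ L : ℝ, 0 ≤ L ∧ Tendsto φ atTop (nhds L) := by
  have hδrec (n : ℕ) : (φ (n + 1 + 1) - φ (n + 1))⁺ ≤ α * (φ (n + 1) - φ n)⁺ + θ (n + 1) := by
    have h := hrec (n + 1) (Nat.le_add_left 1 n)
    rw [Nat.add_sub_cancel] at h
    exact posPart_le_mul_posPart_add (ha (n + 1)) (hαb _) (hθ _) (by linarith)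
  have hδsum : Summable fun n ↦ (φ (n + 1) - φ n)⁺ :=
    summable_of_succ_le_mul_add_s6 (fun _ ↦ posPart_nonneg _) (fun n ↦ hθ (n + 1))
      ((summable_nat_add_iff 1).mpr hθsum) hα hδrec
  obtain ⟨L, hL⟩ := exists_tendsto_of_summable_posPart_sub ⟨0, by rintro _ ⟨n, rfl⟩; exact hφ n⟩ hδsum
  exact ⟨L, ge_of_tendsto' hL hφ, hL⟩
end

section
/- Let C be a nonempty subset of a real Hilbert space H and {x_n} a sequence in H such that (i) for every x ∈ C, lim_{n→∞} ‖x_n - x‖ exists, and (ii) every weak sequential cluster point of {x_n} lies in C. Then {x_n} converges weakly to a point of C. -/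
/-!
A sequence `x` with `‖x n - p‖` convergent for some `p` is bounded, so by sequential
Banach–Alaoglu (applied in the separable closed span of its range) every subsequence has a
weakly convergent subsequence, whose limit lies in `C`. For two such cluster points `p, q ∈ C`,
`‖x n - p‖² - ‖x n - q‖² = ‖p‖² - ‖q‖² + 2⟪q - p, x n⟫`, so `⟪q - p, x n⟫` converges, and
comparing its limits along the two subsequences gives `⟪q - p, q - p⟫ = 0` (Opial's argument).
Hence all weak cluster points coincide and the whole sequence converges weakly.
-/

open Filter RealInnerProductSpace Topology

def TendstoWeakly {H : Type*} [NormedAddCommGroup H] [InnerProductSpace ℝ H]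
    (x : ℕ → H) (p : H) : Prop :=
  ∀ y : H, Tendsto (fun n => ⟪y, x n⟫) atTop (𝓝 ⟪y, p⟫)

section
variable {H : Type*} [NormedAddCommGroup H] [InnerProductSpace ℝ H]

theorem exists_strictMono_tendstoWeakly_of_separable [CompleteSpace H]
    [TopologicalSpace.SeparableSpace H] {x : ℕ → H} {M : ℝ} (hM : ∀ n, ‖x n‖ ≤ M) :
    ∃ φ : ℕ → ℕ, StrictMono φ ∧ ∃ p, TendstoWeakly (x ∘ φ) p := by
  let f : ℕ → WeakDual ℝ H := fun n => StrongDual.toWeakDual (InnerProductSpace.toDual ℝ H (x n))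
  have hf : ∀ n, f n ∈ WeakDual.toStrongDual ⁻¹' Metric.closedBall 0 M := fun n => by
    simpa [f] using hM n
  obtain ⟨a, -, φ, hφ, ha⟩ := WeakDual.isSeqCompact_closedBall ℝ H 0 M hf
  refine ⟨φ, hφ, (InnerProductSpace.toDual ℝ H).symm (WeakDual.toStrongDual a), fun y => ?_⟩
  simp_rw [Function.comp_apply, real_inner_comm _ y, InnerProductSpace.toDual_symm_apply]
  exact ((WeakDual.eval_continuous y).tendsto a).comp ha

/-- The orthogonal projection onto the closed span of the range does not change the inner
products with the sequence. -/
theorem exists_strictMono_tendstoWeakly [CompleteSpace H] {x : ℕ → H} {M : ℝ}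
    (hM : ∀ n, ‖x n‖ ≤ M) : ∃ φ : ℕ → ℕ, StrictMono φ ∧ ∃ p, TendstoWeakly (x ∘ φ) p := by
  set D := (Submodule.span ℝ (Set.range x)).topologicalClosure
  have : CompleteSpace D :=
    (Submodule.span ℝ (Set.range x)).isClosed_topologicalClosure.completeSpace_coe
  have : TopologicalSpace.SeparableSpace D :=
    ((Set.countable_range x).isSeparable.span.closure.mono
      (Submodule.topologicalClosure_coe _).le).separableSpace
  have hxD : ∀ n, x n ∈ D := fun n =>
    Submodule.le_topologicalClosure _ (Submodule.subset_span (Set.mem_range_self n))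
  obtain ⟨φ, hφ, p, hp⟩ :=
    exists_strictMono_tendstoWeakly_of_separable (x := fun n => (⟨x n, hxD n⟩ : D)) hM
  refine ⟨φ, hφ, p, fun y => ?_⟩
  simpa using hp (D.orthogonalProjectionOnto y)

theorem exists_tendsto_inner_sub_of_tendsto_norm_sub {x : ℕ → H} {p q : H} {a b : ℝ}
    (hp : Tendsto (fun n => ‖x n - p‖) atTop (𝓝 a))
    (hq : Tendsto (fun n => ‖x n - q‖) atTop (𝓝 b)) :
    ∃ c, Tendsto (fun n => ⟪q - p, x n⟫) atTop (𝓝 c) := by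
  have key : ∀ n, ⟪q - p, x n⟫ = (‖x n - p‖ ^ 2 - ‖x n - q‖ ^ 2 - ‖p‖ ^ 2 + ‖q‖ ^ 2) / 2 := by
    intro n
    rw [norm_sub_sq_real, norm_sub_sq_real, inner_sub_left, real_inner_comm p, real_inner_comm q]
    ring
  simp_rw [key]
  exact ⟨_, ((((hp.pow 2).sub (hq.pow 2)).sub_const _).add_const _).div_const 2⟩

theorem eq_of_tendstoWeakly_of_tendsto_norm_sub {x : ℕ → H} {p q : H} {φ ψ : ℕ → ℕ}
    (hφ : StrictMono φ) (hψ : StrictMono ψ) (hxp : TendstoWeakly (x ∘ φ) p)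
    (hxq : TendstoWeakly (x ∘ ψ) q) (hp : ∃ a, Tendsto (fun n => ‖x n - p‖) atTop (𝓝 a))
    (hq : ∃ b, Tendsto (fun n => ‖x n - q‖) atTop (𝓝 b)) : p = q := by
  obtain ⟨a, ha⟩ := hp
  obtain ⟨b, hb⟩ := hq
  obtain ⟨c, hc⟩ := exists_tendsto_inner_sub_of_tendsto_norm_sub ha hb
  have hcp : ⟪q - p, p⟫ = c := tendsto_nhds_unique (hxp (q - p)) (hc.comp hφ.tendsto_atTop)
  have hcq : ⟪q - p, q⟫ = c := tendsto_nhds_unique (hxq (q - p)) (hc.comp hψ.tendsto_atTop)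
  have : ⟪q - p, q - p⟫ = 0 := by rw [inner_sub_right, hcp, hcq, sub_self]
  exact (sub_eq_zero.mp (inner_self_eq_zero.mp this)).symm

theorem tendstoWeakly_of_forall_clusterPt_eq [CompleteSpace H] {x : ℕ → H} {M : ℝ}
    (hM : ∀ n, ‖x n‖ ≤ M) {p : H}
    (h : ∀ φ : ℕ → ℕ, StrictMono φ → ∀ q, TendstoWeakly (x ∘ φ) q → q = p) :
    TendstoWeakly x p := by
  intro y
  refine tendsto_of_subseq_tendsto fun ns hns => ?_
  obtain ⟨ms, -, hnsms⟩ := strictMono_subseq_of_tendsto_atTop hns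
  obtain ⟨φ, hφ, q, hq⟩ := exists_strictMono_tendstoWeakly (x := x ∘ (ns ∘ ms)) fun n => hM _
  obtain rfl := h _ (hnsms.comp hφ) q hq
  exact ⟨ms ∘ φ, hq y⟩

end

theorem stmt_7 {H : Type*} [NormedAddCommGroup H] [InnerProductSpace ℝ H]
    [CompleteSpace H] (C : Set H) (hC : C.Nonempty) (x : ℕ → H)
    (h1 : ∀ p ∈ C, ∃ l : ℝ, Tendsto (fun n => ‖x n - p‖) atTop (nhds l))
    (h2 : ∀ p : H,
      (∃ φ : ℕ → ℕ, StrictMono φ ∧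
        ∀ y : H, Tendsto (fun n => ⟪y, x (φ n)⟫) atTop (nhds ⟪y, p⟫)) → p ∈ C) :
    ∃ p ∈ C, ∀ y : H, Tendsto (fun n => ⟪y, x n⟫) atTop (nhds ⟪y, p⟫) := by
  obtain ⟨q, hq⟩ := hC
  obtain ⟨l, hl⟩ := h1 q hq
  obtain ⟨b, hb⟩ := hl.bddAbove_range
  have hM : ∀ n, ‖x n‖ ≤ b + ‖q‖ := fun n =>
    (norm_le_norm_sub_add (x n) q).trans (add_le_add_left (hb ⟨n, rfl⟩) _)
  obtain ⟨φ, hφ, p, hp⟩ := exists_strictMono_tendstoWeakly hM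
  have hpC : p ∈ C := h2 p ⟨φ, hφ, hp⟩
  refine ⟨p, hpC, tendstoWeakly_of_forall_clusterPt_eq hM fun ψ hψ p' hp' => ?_⟩
  exact eq_of_tendstoWeakly_of_tendsto_norm_sub hψ hφ hp' hp (h1 p' (h2 p' ⟨ψ, hψ, hp'⟩))
    (h1 p hpC)
end

section
/- Let C be a nonempty closed convex subset of ℝ^n, x*, w, y, u, ν ∈ ℝ^n and λ > 0. Set y' = P_C(w - λu) and x' = y' - λ(ν - u). If λ‖u - ν‖ ≤ μ‖w - y'‖ for some μ ∈ (0,1), and ⟨ν, y' - x*⟩ ≥ 0, then ‖x' - x*‖² ≤ ‖w - x*‖² - (1 - μ²)‖w - y'‖². -/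
/-!
Expanding squares gives
`‖x' - x*‖² = ‖w - x*‖² - ‖w - y'‖² + λ²‖u - ν‖² - 2λ⟪ν, y' - x*⟫ + 2⟪w - λu - y', x* - y'⟫`.
The last term is nonpositive by the variational characterisation of the projection
`y' = P_C(w - λu)`, the one before it by the solution property of `x*`, and the step-size rule
bounds `λ²‖u - ν‖²` by `μ²‖w - y'‖²`.
-/

open RealInnerProductSpace

section

variable {E : Type*} [NormedAddCommGroup E] [InnerProductSpace ℝ E]

theorem Convex.inner_sub_le_zero_of_forall_norm_sub_le {C : Set E} (hC : Convex ℝ C) {v p : E}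
    (hp : p ∈ C) (hmin : ∀ z ∈ C, ‖v - p‖ ≤ ‖v - z‖) {z : E} (hz : z ∈ C) :
    ⟪v - p, z - p⟫ ≤ 0 := by
  have : Nonempty C := ⟨⟨p, hp⟩⟩
  have hinf : ‖v - p‖ = ⨅ z : C, ‖v - z‖ :=
    le_antisymm (le_ciInf fun z => hmin z z.2)
      (ciInf_le ⟨0, fun _ ⟨z, hz⟩ => hz ▸ norm_nonneg _⟩ (⟨p, hp⟩ : C))
  exact (norm_eq_iInf_iff_real_inner_le_zero hC hp).1 hinf z hz

theorem norm_forward_backward_forward_sub_sq (w u ν y x : E) (lam : ℝ) :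
    ‖y - lam • (ν - u) - x‖ ^ 2 = ‖w - x‖ ^ 2 - ‖w - y‖ ^ 2 + lam ^ 2 * ‖u - ν‖ ^ 2
      - 2 * lam * ⟪ν, y - x⟫ + 2 * ⟪w - lam • u - y, x - y⟫ := by
  simp only [← real_inner_self_eq_norm_sq, inner_sub_left, inner_sub_right,
    real_inner_smul_right, real_inner_comm]
  ring

theorem norm_forward_backward_forward_sub_sq_le {w u ν y x : E} {lam μ : ℝ} (hlam : 0 ≤ lam)
    (hproj : ⟪w - lam • u - y, x - y⟫ ≤ 0) (hstep : lam * ‖u - ν‖ ≤ μ * ‖w - y‖)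
    (hsol : 0 ≤ ⟪ν, y - x⟫) :
    ‖y - lam • (ν - u) - x‖ ^ 2 ≤ ‖w - x‖ ^ 2 - (1 - μ ^ 2) * ‖w - y‖ ^ 2 := by
  have hsq : lam ^ 2 * ‖u - ν‖ ^ 2 ≤ μ ^ 2 * ‖w - y‖ ^ 2 := by
    rw [← mul_pow, ← mul_pow]
    exact pow_le_pow_left₀ (by positivity) hstep 2
  rw [norm_forward_backward_forward_sub_sq w u ν y x lam]
  nlinarith [mul_nonneg hlam hsol]

end

theorem stmt_8_general {n : ℕ} (C : Set (EuclideanSpace ℝ (Fin n)))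
    (hCconv : Convex ℝ C)
    (P : EuclideanSpace ℝ (Fin n) → EuclideanSpace ℝ (Fin n))
    (hP : ∀ u, P u ∈ C ∧ ∀ z ∈ C, ‖u - P u‖ ≤ ‖u - z‖)
    (xstar w u ν : EuclideanSpace ℝ (Fin n)) (hxstar : xstar ∈ C)
    (lam μ : ℝ) (hlam : 0 < lam)
    (y' x' : EuclideanSpace ℝ (Fin n))
    (hy' : y' = P (w - lam • u)) (hx' : x' = y' - lam • (ν - u))
    (hstep : lam * ‖u - ν‖ ≤ μ * ‖w - y'‖)
    (hsol : 0 ≤ ⟪ν, y' - xstar⟫) :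
    ‖x' - xstar‖ ^ 2 ≤ ‖w - xstar‖ ^ 2 - (1 - μ ^ 2) * ‖w - y'‖ ^ 2 := by
  obtain ⟨hy'C, hy'min⟩ := hP (w - lam • u)
  rw [← hy'] at hy'C hy'min
  have hproj := hCconv.inner_sub_le_zero_of_forall_norm_sub_le hy'C hy'min hxstar
  rw [hx']
  exact norm_forward_backward_forward_sub_sq_le hlam.le hproj hstep hsol

theorem stmt_8 {n : ℕ} (C : Set (EuclideanSpace ℝ (Fin n)))
    (hCne : C.Nonempty) (hCc : IsClosed C) (hCconv : Convex ℝ C)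
    (P : EuclideanSpace ℝ (Fin n) → EuclideanSpace ℝ (Fin n))
    (hP : ∀ u, P u ∈ C ∧ ∀ z ∈ C, ‖u - P u‖ ≤ ‖u - z‖)
    (xstar w u ν : EuclideanSpace ℝ (Fin n)) (hxstar : xstar ∈ C)
    (lam μ : ℝ) (hlam : 0 < lam) (hμ0 : 0 < μ) (hμ1 : μ < 1)
    (y' x' : EuclideanSpace ℝ (Fin n))
    (hy' : y' = P (w - lam • u)) (hx' : x' = y' - lam • (ν - u))
    (hstep : lam * ‖u - ν‖ ≤ μ * ‖w - y'‖)
    (hsol : 0 ≤ ⟪ν, y' - xstar⟫) :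
    ‖x' - xstar‖ ^ 2 ≤ ‖w - xstar‖ ^ 2 - (1 - μ ^ 2) * ‖w - y'‖ ^ 2 :=
  stmt_8_general C hCconv P hP xstar w u ν hxstar lam μ hlam y' x' hy' hx' hstep hsol
end

section
/- Suppose nonnegative real sequences satisfy Φ_{n+1} - Φ_n ≤ -ξ‖x_{n+1} - x_n‖² for all n ≥ 1 with ξ > 0, Φ_n ≥ ‖x_n - x*‖² - α‖x_{n-1} - x*‖² with 0 ≤ α < 1, and Φ_{n+1} ≥ -α‖x_n - x*‖². Then ∑_{n=1}^∞ ‖x_{n+1} - x_n‖² < ∞, and hence ‖x_{n+1} - x_n‖ → 0 as n → ∞. -/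
/-!
Since `Φ` is nonincreasing from `n = 1`, the lower bound on `Φ n` gives
`‖x (n+1) - x*‖² ≤ α ‖x n - x*‖² + Φ 1`, so `‖x n - x*‖²` stays bounded because `α < 1`.
Hence `Φ (n+1) ≥ -α ‖x n - x*‖²` is bounded below, and telescoping the decrease of `Φ`
bounds the partial sums of `ξ ‖x (n+1) - x n‖²`.
-/

open Filter

theorem le_max_of_le_mul_add {a : ℕ → ℝ} {α C : ℝ} (hα0 : 0 ≤ α) (hα1 : α < 1)
    (h : ∀ n, a (n + 1) ≤ α * a n + C) (n : ℕ) : a n ≤ max (a 0) (C / (1 - α)) := by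
  induction n with
  | zero => exact le_max_left _ _
  | succ n ih =>
    have hC : C ≤ (1 - α) * max (a 0) (C / (1 - α)) := by
      rw [← div_le_iff₀' (by linarith)]
      exact le_max_right _ _
    nlinarith [h n, mul_le_mul_of_nonneg_left ih hα0]

theorem summable_of_add_mul_le_of_forall_le {f Φ : ℕ → ℝ} {ξ m : ℝ} (hξ : 0 < ξ) (hf : ∀ n, 0 ≤ f n)
    (hdec : ∀ n, Φ (n + 1) + ξ * f n ≤ Φ n) (hbdd : ∀ n, m ≤ Φ n) : Summable f := by
  refine summable_of_sum_range_le hf (c := (Φ 0 - m) / ξ) fun N => ?_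
  have htel : ξ * ∑ k ∈ Finset.range N, f k ≤ Φ 0 - Φ N := by
    rw [Finset.mul_sum, ← Finset.sum_range_sub']
    exact Finset.sum_le_sum fun k _ => by linarith [hdec k]
  rw [le_div_iff₀' hξ]
  linarith [hbdd N]

theorem tendsto_zero_of_summable_sq {g : ℕ → ℝ} (hg : ∀ n, 0 ≤ g n)
    (hsum : Summable fun n => g n ^ 2) : Tendsto g atTop (nhds 0) := by
  simpa [Real.sqrt_sq (hg _)] using hsum.tendsto_atTop_zero.sqrt

theorem stmt_13 {d : ℕ} (x : ℕ → EuclideanSpace ℝ (Fin d))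
    (xstar : EuclideanSpace ℝ (Fin d)) (Φ : ℕ → ℝ) (α ξ : ℝ)
    (hα0 : 0 ≤ α) (hα1 : α < 1) (hξ : 0 < ξ)
    (hdec : ∀ n, 1 ≤ n → Φ (n + 1) - Φ n ≤ -ξ * ‖x (n + 1) - x n‖ ^ 2)
    (hlow : ∀ n, 1 ≤ n → ‖x n - xstar‖ ^ 2 - α * ‖x (n - 1) - xstar‖ ^ 2 ≤ Φ n)
    (hlow2 : ∀ n, 1 ≤ n → -α * ‖x n - xstar‖ ^ 2 ≤ Φ (n + 1)) :
    (Summable fun n => ‖x (n + 1) - x n‖ ^ 2) ∧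
      Tendsto (fun n => ‖x (n + 1) - x n‖) atTop (nhds 0) := by
  have hanti : Antitone fun n => Φ (n + 1) := antitone_nat_of_succ_le fun n => by
    nlinarith [hdec (n + 1) (by omega), sq_nonneg ‖x (n + 2) - x (n + 1)‖]
  set B := max (‖x 0 - xstar‖ ^ 2) (Φ 1 / (1 - α))
  have hbdd : ∀ n, ‖x n - xstar‖ ^ 2 ≤ B :=
    le_max_of_le_mul_add (a := fun n => ‖x n - xstar‖ ^ 2) hα0 hα1 fun n => by
      have hstep := hlow (n + 1) (by omega)
      rw [Nat.add_sub_cancel] at hstep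
      linarith [hanti (Nat.zero_le n)]
  have hsum : Summable fun n => ‖x (n + 1) - x n‖ ^ 2 := by
    refine (summable_nat_add_iff 2).mp (summable_of_add_mul_le_of_forall_le hξ (Φ := fun n => Φ (n + 2))
      (m := -α * B) (fun _ => sq_nonneg _) (fun n => ?_) fun n => ?_)
    · linarith [hdec (n + 2) (by omega)]
    · nlinarith [hlow2 (n + 1) (by omega), mul_le_mul_of_nonneg_left (hbdd (n + 1)) hα0]
  exact ⟨hsum, tendsto_zero_of_summable_sq (fun _ => norm_nonneg _) hsum⟩
end

section
/- Let C be a nonempty closed convex subset of ℝ^n and let R(x) denote the output of the cutting-plane Procedure A (iterating y_{k+1} = y_k - 2g(y_k)·w_k/‖w_k‖² with w_k ∈ ∂g(y_k) until y_{k+1} ∈ C, where C = {x : g(x) ≤ 0} and g is convex). Then ‖R(x) - y‖ ≤ ‖x - y‖ for all y ∈ C, and R(x) ∈ C. -/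
/-! Each step of Procedure A reflects `y i` through the hyperplane on which the affine minorant
`g (y i) + ⟪w, · - y i⟫` of `g` vanishes. The point `y i` lies on the side where this minorant
is positive, while all of `C` lies on the side where it is nonpositive, and reflecting a point
through a hyperplane separating it from `z` does not increase its distance to `z`. -/

open RealInnerProductSpace

theorem Nat.apply_le_apply_zero_of_succ_le {α : Type*} [Preorder α] {f : ℕ → α} {k : ℕ}
    (h : ∀ i < k, f (i + 1) ≤ f i) : f k ≤ f 0 := by
  induction k with
  | zero => rfl
  | succ k ih => exact (h k k.lt_succ_self).trans (ih fun i hi ↦ h i (hi.trans k.lt_succ_self))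

theorem norm_reflection_sub_le {E : Type*} [NormedAddCommGroup E] [InnerProductSpace ℝ E]
    {a : ℝ} {y w z : E} (ha : 0 ≤ a) (hz : a + ⟪w, z - y⟫ ≤ 0) :
    ‖y - (2 * a / ‖w‖ ^ 2) • w - z‖ ≤ ‖y - z‖ := by
  set t := 2 * a / ‖w‖ ^ 2
  have hnorm : t ^ 2 * ‖w‖ ^ 2 = 2 * t * a := by
    rcases eq_or_ne ‖w‖ 0 with hw | hw
    · simp [t, hw]
    · simp only [t]; field_simp
  have hinner : a ≤ ⟪y - z, w⟫ := by
    rw [real_inner_comm, ← neg_sub, inner_neg_right]; linarith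
  rw [← sq_le_sq₀ (norm_nonneg _) (norm_nonneg _)]
  calc ‖y - t • w - z‖ ^ 2 = ‖(y - z) - t • w‖ ^ 2 := by rw [sub_right_comm]
    _ = ‖y - z‖ ^ 2 - 2 * t * (⟪y - z, w⟫ - a) := by
      rw [norm_sub_sq_real, real_inner_smul_right, norm_smul, mul_pow, Real.norm_eq_abs, sq_abs,
        hnorm]
      ring
    _ ≤ ‖y - z‖ ^ 2 := sub_le_self _ (mul_nonneg (by positivity) (sub_nonneg.2 hinner))

theorem stmt_15_general {n : ℕ} (g : EuclideanSpace ℝ (Fin n) → ℝ)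
    (C : Set (EuclideanSpace ℝ (Fin n))) (hC : C = {x | g x ≤ 0})
    (x : EuclideanSpace ℝ (Fin n)) (k : ℕ) (y : ℕ → EuclideanSpace ℝ (Fin n))
    (hy0 : y 0 = x)
    (hstep : ∀ i < k, y i ∉ C ∧
      ∃ w : EuclideanSpace ℝ (Fin n),
        (∀ u, g (y i) + ⟪w, u - y i⟫ ≤ g u) ∧
        y (i + 1) = y i - (2 * g (y i) / ‖w‖ ^ 2) • w)
    (hterm : y k ∈ C) (R : EuclideanSpace ℝ (Fin n)) (hR : R = y k) :
    R ∈ C ∧ ∀ z ∈ C, ‖R - z‖ ≤ ‖x - z‖ := by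
  subst hR hy0 hC
  refine ⟨hterm, fun z hz ↦ Nat.apply_le_apply_zero_of_succ_le (f := fun i ↦ ‖y i - z‖) ?_⟩
  intro i hi
  obtain ⟨hyi, w, hw, hnext⟩ := hstep i hi
  rw [hnext]
  exact norm_reflection_sub_le (not_le.1 hyi).le ((hw z).trans hz)

theorem stmt_15 {n : ℕ} (g : EuclideanSpace ℝ (Fin n) → ℝ)
    (hg : ConvexOn ℝ Set.univ g)
    (C : Set (EuclideanSpace ℝ (Fin n))) (hC : C = {x | g x ≤ 0})
    (hCne : C.Nonempty)
    (x : EuclideanSpace ℝ (Fin n)) (k : ℕ) (y : ℕ → EuclideanSpace ℝ (Fin n))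
    (hy0 : y 0 = x)
    (hstep : ∀ i < k, y i ∉ C ∧
      ∃ w : EuclideanSpace ℝ (Fin n),
        (∀ u, g (y i) + ⟪w, u - y i⟫ ≤ g u) ∧
        y (i + 1) = y i - (2 * g (y i) / ‖w‖ ^ 2) • w)
    (hterm : y k ∈ C) (R : EuclideanSpace ℝ (Fin n)) (hR : R = y k) :
    R ∈ C ∧ ∀ z ∈ C, ‖R - z‖ ≤ ‖x - z‖ :=
  stmt_15_general g C hC x k y hy0 hstep hterm R hR
end
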